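/- Let z₋, z₊ ∈ ℝ with 0 < z₋ < z₊. Then ∫₀^{z₋} √(z₊−z) dz / (√z · √(z₋−z)) = π·√z₊ · F(1/2, −1/2; 1; z₋/z₊). -/

import Mathlib

/-!
Expand `√(z₊ - z) = √z₊ · Σ (-1/2)ₙ/n! · (z/z₊)ⁿ` by the binomial series and integrate term by
term against the weight `1/(√z √(z₋ - z))`; the series of absolute values converges because
`z₋ < z₊`. The `n`-th moment of the weight is the Beta integral
`z₋ⁿ B(n + 1/2, 1/2) = π (1/2)ₙ/n! · z₋ⁿ`, and collecting terms gives the hypergeometric series.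
-/

/-- The Pochhammer symbol `(q)_k = q(q+1)⋯(q+k−1)`. -/
noncomputable def poch (q : ℝ) (k : ℕ) : ℝ := ∏ i ∈ Finset.range k, (q + (i : ℝ))

/-- The Gauss hypergeometric series `F(a,b;c;x) = Σ_n (a)_n (b)_n / ((c)_n n!) xⁿ`. -/
noncomputable def gaussF (a b c x : ℝ) : ℝ :=
  ∑' n : ℕ, poch a n * poch b n / (poch c n * (n.factorial : ℝ)) * x ^ n

open Real MeasureTheory intervalIntegral Polynomial Nat

lemma poch_succ (q : ℝ) (n : ℕ) : poch q (n + 1) = poch q n * (q + n) :=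
  Finset.prod_range_succ _ _

lemma poch_eq_eval_ascPochhammer (q : ℝ) (n : ℕ) : poch q n = (ascPochhammer ℝ n).eval q := by
  induction n with
  | zero => simp [poch]
  | succ n ih => rw [poch_succ, ih, ascPochhammer_succ_eval]

lemma poch_one (n : ℕ) : poch 1 n = n ! := by
  rw [poch_eq_eval_ascPochhammer, ascPochhammer_eval_one]

lemma poch_pos {q : ℝ} (hq : 0 < q) (n : ℕ) : 0 < poch q n :=
  Finset.prod_pos fun _ _ ↦ by positivity

lemma poch_le_factorial {q : ℝ} (hq₀ : 0 ≤ q) (hq₁ : q ≤ 1) (n : ℕ) : poch q n ≤ n ! := by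
  rw [← poch_one]
  exact Finset.prod_le_prod (fun _ _ ↦ by positivity) fun _ _ ↦ by linarith

/-- The Taylor coefficients of `√(1 - x)`. -/
noncomputable def sqrtCoeff (n : ℕ) : ℝ := poch (-(1 / 2)) n / n !

lemma choose_one_half_eq_sqrtCoeff (n : ℕ) :
    Ring.choose (1 / 2 : ℝ) n = (-1) ^ n * sqrtCoeff n := by
  have h := Ring.factorial_nsmul_multichoose_eq_ascPochhammer (-(1 / 2) : ℝ) n
  rw [ascPochhammer_smeval_eq_eval, ← poch_eq_eval_ascPochhammer, nsmul_eq_mul] at h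
  conv_lhs => rw [← neg_neg (1 / 2 : ℝ), Ring.choose_neg', Units.smul_def, zsmul_eq_mul,
    Int.cast_negOnePow_natCast]
  rw [sqrtCoeff, ← h]
  field_simp

lemma sqrtCoeff_mul_pow (n : ℕ) (x : ℝ) :
    sqrtCoeff n * x ^ n = Ring.choose (1 / 2 : ℝ) n * (-x) ^ n := by
  rw [choose_one_half_eq_sqrtCoeff, mul_comm ((-1 : ℝ) ^ n), mul_assoc, ← mul_pow, neg_one_mul,
    neg_neg]

lemma hasSum_sqrtCoeff_mul_pow {x : ℝ} (hx : |x| < 1) :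
    HasSum (fun n ↦ sqrtCoeff n * x ^ n) (√(1 - x)) := by
  have := (one_add_rpow_hasFPowerSeriesOnBall_zero (a := 1 / 2)).hasSum (y := -x)
    (by simpa [enorm_eq_nnnorm, ← NNReal.coe_lt_coe] using hx)
  simpa [sqrtCoeff_mul_pow, binomialSeries, FormalMultilinearSeries.ofScalars_apply_eq,
    sqrt_eq_rpow, sub_eq_add_neg, mul_comm] using this

lemma summable_abs_sqrtCoeff_mul_pow {x : ℝ} (hx : |x| < 1) :
    Summable fun n ↦ |sqrtCoeff n| * |x| ^ n := by
  have := (binomialSeries ℝ (1 / 2 : ℝ)).summable_norm_apply (x := -x)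
    ((Metric.eball_subset_eball binomialSeries_radius_ge_one)
      (by simpa [enorm_eq_nnnorm, ← NNReal.coe_lt_coe] using hx))
  simp only [binomialSeries, FormalMultilinearSeries.ofScalars_apply_eq, smul_eq_mul,
    choose_one_half_eq_sqrtCoeff] at this
  simpa [abs_mul, mul_comm] using this

lemma hasSum_sqrt_sub {x y : ℝ} (hy : 0 < y) (hx : |x| < y) :
    HasSum (fun n ↦ √y * sqrtCoeff n / y ^ n * x ^ n) (√(y - x)) := by
  have h := (hasSum_sqrtCoeff_mul_pow (x := x / y)
    (by rwa [abs_div, abs_of_pos hy, div_lt_one hy])).mul_left √y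
  rw [← sqrt_mul hy.le, mul_one_sub, mul_div_cancel₀ _ hy.ne'] at h
  have hterm : (fun n ↦ √y * sqrtCoeff n / y ^ n * x ^ n)
      = fun n ↦ √y * (sqrtCoeff n * (x / y) ^ n) := by
    funext n
    rw [div_pow]
    ring
  rwa [hterm]

theorem integral_rpow_mul_sub_rpow {s t a : ℝ} (hs : 0 < s) (ht : 0 < t) (ha : 0 < a) :
    ∫ x in 0..a, x ^ (s - 1) * (a - x) ^ (t - 1)
      = a ^ (s + t - 1) * (Gamma s * Gamma t / Gamma (s + t)) := by
  have hB : Complex.betaIntegral s t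
      = Complex.Gamma s * Complex.Gamma t / Complex.Gamma (s + t) := by
    rw [eq_div_iff (Complex.Gamma_ne_zero_of_re_pos (by simp; linarith)), mul_comm,
      Complex.Gamma_mul_Gamma_eq_betaIntegral (by simpa) (by simpa)]
  have hC := Complex.betaIntegral_scaled s t ha
  rw [hB] at hC
  have hofReal : ∫ x in (0 : ℝ)..a, (x : ℂ) ^ ((s : ℂ) - 1) * ((a : ℂ) - x) ^ ((t : ℂ) - 1)
      = ((∫ x in (0 : ℝ)..a, x ^ (s - 1) * (a - x) ^ (t - 1) : ℝ) : ℂ) := by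
    rw [← intervalIntegral.integral_ofReal]
    refine intervalIntegral.integral_congr fun x hx ↦ ?_
    rw [Set.uIcc_of_le ha.le] at hx
    push_cast [Complex.ofReal_cpow hx.1, Complex.ofReal_cpow (sub_nonneg.2 hx.2)]
    rfl
  apply Complex.ofReal_injective
  rw [← hofReal, hC]
  push_cast [Complex.ofReal_cpow ha.le, ← Complex.Gamma_ofReal]
  rfl

lemma Gamma_nat_add_half_eq_poch (n : ℕ) : Gamma (n + 1 / 2) = poch (1 / 2) n * √π := by
  induction n with
  | zero => simpa [poch] using Gamma_one_half_eq
  | succ n ih =>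
    rw [Nat.cast_succ, add_right_comm, Gamma_add_one (by positivity), ih, poch_succ]
    ring

lemma rpow_nat_add_half_sub_one_mul {a x : ℝ} (n : ℕ) (hx : x ∈ Set.Icc 0 a) :
    x ^ ((n + 1 / 2 : ℝ) - 1) * (a - x) ^ ((1 / 2 : ℝ) - 1) = x ^ n / (√x * √(a - x)) := by
  have hn : (n : ℝ) - 1 / 2 ≠ 0 := by
    rcases n with _ | n <;> push_cast <;> intro h <;> linarith
  rw [show (n + 1 / 2 : ℝ) - 1 = n - 1 / 2 by ring, show (1 / 2 : ℝ) - 1 = -(1 / 2) by norm_num,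
    rpow_sub' hx.1 hn, rpow_natCast, rpow_neg (sub_nonneg.2 hx.2), ← sqrt_eq_rpow,
    ← sqrt_eq_rpow]
  ring

theorem integral_pow_div_sqrt_mul_sqrt {a : ℝ} (n : ℕ) (ha : 0 < a) :
    ∫ x in 0..a, x ^ n / (√x * √(a - x)) = π * poch (1 / 2) n / n ! * a ^ n := by
  have h := integral_rpow_mul_sub_rpow (s := n + 1 / 2) (t := 1 / 2) (by positivity)
    one_half_pos ha
  rw [integral_congr fun x hx ↦ rpow_nat_add_half_sub_one_mul n (Set.uIcc_of_le ha.le ▸ hx)] at h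
  rw [h, show (n + 1 / 2 + 1 / 2 - 1 : ℝ) = n by ring, rpow_natCast, Gamma_nat_add_half_eq_poch,
    Gamma_one_half_eq, show (n + 1 / 2 + 1 / 2 : ℝ) = n + 1 by ring, Gamma_nat_eq_factorial]
  field_simp
  rw [sq_sqrt pi_pos.le]

-- A non-integrable function has integral `0`, and this one has a positive integral.
theorem intervalIntegrable_pow_div_sqrt_mul_sqrt {a : ℝ} (n : ℕ) (ha : 0 < a) :
    IntervalIntegrable (fun x ↦ x ^ n / (√x * √(a - x))) volume 0 a :=
  intervalIntegrable_of_integral_ne_zero <| by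
    rw [integral_pow_div_sqrt_mul_sqrt n ha]
    have := poch_pos one_half_pos n
    positivity

theorem integral_div_eq_tsum_of_hasSum_pow {f v : ℝ → ℝ} {c m : ℕ → ℝ} {b : ℝ} (hb : 0 ≤ b)
    (hf : ∀ x ∈ Set.Ioc 0 b, HasSum (fun n ↦ c n * x ^ n) (f x))
    (hv : ∀ x ∈ Set.Ioc 0 b, 0 ≤ v x)
    (hint : ∀ n, IntervalIntegrable (fun x ↦ x ^ n / v x) volume 0 b)
    (hm : ∀ n, ∫ x in 0..b, x ^ n / v x = m n)
    (hsum : Summable fun n ↦ |c n| * m n) :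
    ∫ x in 0..b, f x / v x = ∑' n, c n * m n := by
  have hm' : ∀ n, ∫ x in Set.Ioc 0 b, x ^ n / v x = m n := fun n ↦ by
    rw [← integral_of_le hb, hm]
  have hnorm : ∀ n, ∫ x in Set.Ioc 0 b, ‖c n * x ^ n / v x‖ = |c n| * m n := fun n ↦ by
    rw [← hm' n, ← MeasureTheory.integral_const_mul]
    refine setIntegral_congr_fun measurableSet_Ioc fun x hx ↦ ?_
    rw [mul_div_assoc, norm_mul, Real.norm_eq_abs, Real.norm_of_nonneg]
    exact div_nonneg (pow_nonneg hx.1.le n) (hv x hx)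
  have hsum_int := hasSum_integral_of_summable_integral_norm
    (F := fun n x ↦ c n * x ^ n / v x)
    (fun n ↦ by simpa only [mul_div_assoc] using (hint n).1.const_mul (c n))
    (by simpa only [hnorm] using hsum)
  calc ∫ x in 0..b, f x / v x
      = ∫ x in Set.Ioc 0 b, ∑' n, c n * x ^ n / v x := by
        rw [integral_of_le hb]
        exact setIntegral_congr_fun measurableSet_Ioc fun x hx ↦
          ((hf x hx).div_const (v x)).tsum_eq.symm
    _ = ∑' n, c n * m n := by
        rw [← hsum_int.tsum_eq]
        simp only [mul_div_assoc, MeasureTheory.integral_const_mul, hm']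

lemma summable_abs_coeff_mul_moment {a b : ℝ} (ha : 0 ≤ a) (hab : a < b) :
    Summable fun n ↦ |√b * sqrtCoeff n / b ^ n| * (π * poch (1 / 2) n / n ! * a ^ n) := by
  have hb : 0 < b := ha.trans_lt hab
  have hx : |a / b| < 1 := by rwa [abs_of_nonneg (by positivity), div_lt_one hb]
  refine ((summable_abs_sqrtCoeff_mul_pow hx).mul_left (√b * π)).of_nonneg_of_le
    (fun n ↦ ?_) fun n ↦ ?_
  · have := poch_pos one_half_pos n
    positivity
  · have := poch_pos one_half_pos n
    have hle : poch (1 / 2) n / n ! ≤ 1 :=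
      div_le_one_of_le₀ (poch_le_factorial (by norm_num) (by norm_num) n) (by positivity)
    calc |√b * sqrtCoeff n / b ^ n| * (π * poch (1 / 2) n / n ! * a ^ n)
        = √b * π * (|sqrtCoeff n| * |a / b| ^ n) * (poch (1 / 2) n / n !) := by
          rw [abs_div, abs_mul, abs_of_nonneg (sqrt_nonneg b), abs_pow, abs_of_pos hb,
            abs_of_nonneg (div_nonneg ha hb.le), div_pow]
          ring
      _ ≤ √b * π * (|sqrtCoeff n| * |a / b| ^ n) :=
          mul_le_of_le_one_right (by positivity) hle

/-- for `0 < z₋ < z₊`,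
`∫₀^{z₋} √(z₊−z)/(√z √(z₋−z)) dz = π √z₊ · F(1/2,−1/2;1;z₋/z₊)`
(`zm` stands for `z₋`, `zp` for `z₊`). -/
theorem stmt_11 (zm zp : ℝ) (h0 : 0 < zm) (h1 : zm < zp) :
    ∫ z in (0 : ℝ)..zm, Real.sqrt (zp - z) / (Real.sqrt z * Real.sqrt (zm - z))
      = Real.pi * Real.sqrt zp * gaussF (1 / 2) (-(1 / 2)) 1 (zm / zp) := by
  have hzp : 0 < zp := h0.trans h1
  have hf : ∀ z ∈ Set.Ioc 0 zm, HasSum (fun n ↦ √zp * sqrtCoeff n / zp ^ n * z ^ n) √(zp - z) :=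
    fun z hz ↦ hasSum_sqrt_sub hzp (by rw [abs_of_pos hz.1]; linarith [hz.2])
  rw [integral_div_eq_tsum_of_hasSum_pow h0.le hf (fun _ _ ↦ by positivity)
    (intervalIntegrable_pow_div_sqrt_mul_sqrt · h0) (integral_pow_div_sqrt_mul_sqrt · h0)
    (summable_abs_coeff_mul_moment h0.le h1), gaussF, ← tsum_mul_left]
  congr 1 with n
  rw [poch_one, sqrtCoeff, div_pow]
  field_simp
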